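/- arXiv:1407.3372 — 3 statements merged into one kernel-verified Lean document; each statement's English description precedes it below -/
import Mathlib

section
/- Let X_n be a sequence of ℝ^d-valued random vectors on a probability space such that liminf_n ‖X_n(ω)‖ < ∞ for almost all ω. Then there exists an increasing sequence of integer-valued random variables σ_k such that X_{σ_k} converges almost surely; equivalently, there is a sequence of ℝ^d-valued random vectors Y_n converging pointwise almost surely to some ℝ^d-valued random vector Y, such that for almost all ω the sequence (Y_n(ω)) is a convergent subsequence of (X_n(ω)). -/
open MeasureTheory Filter Finset
open scoped ENNReal NNReal

noncomputable section

namespace BidAskFTAP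

variable {Ω : Type*}

/-- Componentwise positive part of a vector in `ℝ^d`. -/
def posPart {d : ℕ} (x : Fin d → ℝ) : Fin d → ℝ := fun i => max (x i) 0

/-- Componentwise negative part of a vector in `ℝ^d`. -/
def negPart {d : ℕ} (x : Fin d → ℝ) : Fin d → ℝ := fun i => max (-(x i)) 0

/-- Inner product on `ℝ^d`. -/
def dotp {d : ℕ} (x y : Fin d → ℝ) : ℝ := ∑ i, x i * y i

section Market

variable [m : MeasurableSpace Ω] {d : ℕ}

/-- `F` is a filtration on `(Ω, m)` with horizon `T`: monotone, sub-σ-algebras of `m`,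
and `F T = m` (i.e. `𝓕_T = 𝓕`). -/
def IsFiltration (F : ℕ → MeasurableSpace Ω) (T : ℕ) : Prop :=
  Monotone F ∧ (∀ t, F t ≤ m) ∧ F T = m

/-- Adaptedness of an `ℝ^d`-valued process up to time `T`. -/
def AdaptedProc (F : ℕ → MeasurableSpace Ω) (T : ℕ) (S : ℕ → Ω → Fin d → ℝ) : Prop :=
  ∀ t ≤ T, Measurable[F t] (S t)

/-- Standing assumptions on the bid and ask price processes `S̲ = Sb`, `S̄ = Sa`:
adapted, strictly positive components, and `S̲ ≤ S̄` a.s. -/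
def IsBidAsk (P : Measure Ω) (F : ℕ → MeasurableSpace Ω) (T : ℕ)
    (Sb Sa : ℕ → Ω → Fin d → ℝ) : Prop :=
  AdaptedProc F T Sb ∧ AdaptedProc F T Sa ∧
  (∀ t ≤ T, ∀ i, ∀ᵐ ω ∂P, 0 < Sb t ω i) ∧
  (∀ t ≤ T, ∀ i, ∀ᵐ ω ∂P, 0 < Sa t ω i) ∧
  (∀ t ≤ T, ∀ i, ∀ᵐ ω ∂P, Sb t ω i ≤ Sa t ω i)

/-- A trading strategy on horizon `T`: predictable (`H t` is `𝓕_{t-1}`-measurable),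
with the convention `H 0 = 0` (so that `ΔH 1 = H 1`). -/
def IsStrategy (F : ℕ → MeasurableSpace Ω) (T : ℕ) (H : ℕ → Ω → Fin d → ℝ) : Prop :=
  H 0 = 0 ∧ ∀ t, 1 ≤ t → t ≤ T → Measurable[F (t - 1)] (H t)

/-- Membership in `𝒫_T^+`: componentwise nonnegative. -/
def NonnegStrategy (T : ℕ) (H : ℕ → Ω → Fin d → ℝ) : Prop :=
  ∀ t ≤ T, ∀ ω, ∀ i, 0 ≤ H t ω i

/-- Membership in `𝒫_T^-`: componentwise nonpositive. -/
def NonposStrategy (T : ℕ) (H : ℕ → Ω → Fin d → ℝ) : Prop :=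
  ∀ t ≤ T, ∀ ω, ∀ i, H t ω i ≤ 0

/-- Uniformly bounded strategy. -/
def BoundedStrategy (T : ℕ) (H : ℕ → Ω → Fin d → ℝ) : Prop :=
  ∃ C : ℝ, ∀ t ≤ T, ∀ ω, ∀ i, |H t ω i| ≤ C

/-- The immediate–liquidation value process
`x_T(H) = -∑_{j=1}^T (ΔH_j)⁺·S̄_{j-1} + ∑_{j=1}^T (ΔH_j)⁻·S̲_{j-1} + (H_T)⁺·S̲_T - (H_T)⁻·S̄_T`. -/
def xval (Sb Sa : ℕ → Ω → Fin d → ℝ) (T : ℕ) (H : ℕ → Ω → Fin d → ℝ) (ω : Ω) : ℝ :=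
  (∑ j ∈ Icc 1 T, (dotp (negPart (H j ω - H (j - 1) ω)) (Sb (j - 1) ω)
    - dotp (posPart (H j ω - H (j - 1) ω)) (Sa (j - 1) ω)))
  + dotp (posPart (H T ω)) (Sb T ω) - dotp (negPart (H T ω)) (Sa T ω)

/-- The gain `(H · S)_T = ∑_{j=1}^T H_j · (S_j - S_{j-1})`. -/
def gain (S : ℕ → Ω → Fin d → ℝ) (T : ℕ) (H : ℕ → Ω → Fin d → ℝ) (ω : Ω) : ℝ :=
  ∑ j ∈ Icc 1 T, dotp (H j ω) (S j ω - S (j - 1) ω)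

/-- Membership (as elements of `L⁰`, i.e. up to a.s. equality) in
`𝒜_t = ℛ_t - L⁰₊(𝓕_t)`. -/
def memA (P : Measure Ω) (F : ℕ → MeasurableSpace Ω) (Sb Sa : ℕ → Ω → Fin d → ℝ)
    (t : ℕ) (f : Ω → ℝ) : Prop :=
  ∃ H : ℕ → Ω → Fin d → ℝ, IsStrategy F t H ∧
    ∃ r : Ω → ℝ, Measurable[F t] r ∧ (∀ᵐ ω ∂P, 0 ≤ r ω) ∧
      f =ᵐ[P] fun ω => xval Sb Sa t H ω - r ω

/-- The no-arbitrage condition `𝒜_t ∩ L⁰₊(𝓕_t) = {0}` at horizon `t`. -/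
def NA (P : Measure Ω) (F : ℕ → MeasurableSpace Ω) (Sb Sa : ℕ → Ω → Fin d → ℝ)
    (t : ℕ) : Prop :=
  ∀ f : Ω → ℝ, memA P F Sb Sa t f → (∀ᵐ ω ∂P, 0 ≤ f ω) → f =ᵐ[P] 0

/-- Two measures are equivalent: mutually absolutely continuous. -/
def EquivMeasure (P Q : Measure Ω) : Prop := P ≪ Q ∧ Q ≪ P

/-- The Radon–Nikodym density `dQ/dP` belongs to `L^∞(P)`. -/
def BoundedDensity (P Q : Measure Ω) : Prop :=
  ∃ C : ℝ≥0, ∀ᵐ ω ∂P, Q.rnDeriv P ω ≤ (C : ℝ≥0∞)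

/-- `Q` is an equivalent bid-ask martingale measure (EBAMM) for `(S̲, S̄)`:
`Q ∼ P`, all `S̄_t` are `Q`-integrable, and for all `1 ≤ t ≤ T` and coordinates `i`:
`S̲_{t-1}^i ≤ E_Q[S̄_t^i | 𝓕_{t-1}]` and `E_Q[S̲_t^i | 𝓕_{t-1}] ≤ S̄_{t-1}^i` a.s. -/
def IsEBAMM (P : Measure Ω) (F : ℕ → MeasurableSpace Ω) (T : ℕ)
    (Sb Sa : ℕ → Ω → Fin d → ℝ) (Q : Measure Ω) : Prop :=
  IsProbabilityMeasure Q ∧ EquivMeasure P Q ∧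
  (∀ t ≤ T, ∀ i, Integrable (fun ω => Sa t ω i) Q) ∧
  (∀ t, 1 ≤ t → t ≤ T → ∀ i,
    (∀ᵐ ω ∂P, Sb (t - 1) ω i ≤ (Q[fun ω => Sa t ω i | F (t - 1)]) ω) ∧
    (∀ᵐ ω ∂P, (Q[fun ω => Sb t ω i | F (t - 1)]) ω ≤ Sa (t - 1) ω i))

/-- `(S̃, Q)` is a consistent price system: `Q ∼ P`, `S̃` adapted, evolving between bid and
ask prices, and a `Q`-martingale. -/
def IsCPS (P : Measure Ω) (F : ℕ → MeasurableSpace Ω) (T : ℕ)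
    (Sb Sa St : ℕ → Ω → Fin d → ℝ) (Q : Measure Ω) : Prop :=
  IsProbabilityMeasure Q ∧ EquivMeasure P Q ∧ AdaptedProc F T St ∧
  (∀ t ≤ T, ∀ i, Integrable (fun ω => St t ω i) Q) ∧
  (∀ t ≤ T, ∀ i, ∀ᵐ ω ∂P, Sb t ω i ≤ St t ω i ∧ St t ω i ≤ Sa t ω i) ∧
  (∀ t, 1 ≤ t → t ≤ T → ∀ i,
    Q[fun ω => St t ω i | F (t - 1)] =ᵐ[P] fun ω => St (t - 1) ω i)

/-- `(S̃, Q)` is a supermartingale consistent price system. -/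
def IsSupCPS (P : Measure Ω) (F : ℕ → MeasurableSpace Ω) (T : ℕ)
    (Sb Sa St : ℕ → Ω → Fin d → ℝ) (Q : Measure Ω) : Prop :=
  IsProbabilityMeasure Q ∧ EquivMeasure P Q ∧ AdaptedProc F T St ∧
  (∀ t ≤ T, ∀ i, Integrable (fun ω => St t ω i) Q) ∧
  (∀ t ≤ T, ∀ i, ∀ᵐ ω ∂P, Sb t ω i ≤ St t ω i ∧ St t ω i ≤ Sa t ω i) ∧
  (∀ t, 1 ≤ t → t ≤ T → ∀ i,
    (∀ᵐ ω ∂P, (Q[fun ω => St t ω i | F (t - 1)]) ω ≤ St (t - 1) ω i))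

/-- `(S̃, Q)` is a submartingale consistent price system. -/
def IsSubCPS (P : Measure Ω) (F : ℕ → MeasurableSpace Ω) (T : ℕ)
    (Sb Sa St : ℕ → Ω → Fin d → ℝ) (Q : Measure Ω) : Prop :=
  IsProbabilityMeasure Q ∧ EquivMeasure P Q ∧ AdaptedProc F T St ∧
  (∀ t ≤ T, ∀ i, Integrable (fun ω => St t ω i) Q) ∧
  (∀ t ≤ T, ∀ i, ∀ᵐ ω ∂P, Sb t ω i ≤ St t ω i ∧ St t ω i ≤ Sa t ω i) ∧
  (∀ t, 1 ≤ t → t ≤ T → ∀ i,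
    (∀ᵐ ω ∂P, St (t - 1) ω i ≤ (Q[fun ω => St t ω i | F (t - 1)]) ω))

/-- Membership (up to a.s. equality) in
`F_{t-1,t+k} = ℛ_{t-1,t+k}⁺ + ℛ_{t-1,t+k}⁻ - L⁰₊(𝓕_{t+k})`:
`f = Hp·(S̲_{t+k} - S̄_{t-1}) - Hm·(S̄_{t+k} - S̲_{t-1}) - r` with `Hp, Hm ≥ 0`
`𝓕_{t-1}`-measurable and `r ∈ L⁰₊(𝓕_{t+k})`. -/
def memFtk (P : Measure Ω) (F : ℕ → MeasurableSpace Ω) (Sb Sa : ℕ → Ω → Fin d → ℝ)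
    (t k : ℕ) (f : Ω → ℝ) : Prop :=
  ∃ (Hp Hm : Ω → Fin d → ℝ) (r : Ω → ℝ),
    Measurable[F (t - 1)] Hp ∧ Measurable[F (t - 1)] Hm ∧
    (∀ ω i, 0 ≤ Hp ω i) ∧ (∀ ω i, 0 ≤ Hm ω i) ∧
    Measurable[F (t + k)] r ∧ (∀ᵐ ω ∂P, 0 ≤ r ω) ∧
    f =ᵐ[P] fun ω =>
      dotp (Hp ω) (Sb (t + k) ω - Sa (t - 1) ω)
        - dotp (Hm ω) (Sa (t + k) ω - Sb (t - 1) ω) - r ω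

/-- Membership (up to a.s. equality) in
`F_t = ∑_{j<t} ℛ_{j,t}⁺ + ∑_{j<t} ℛ_{j,t}⁻ - L⁰₊(𝓕_t)`. -/
def memFt (P : Measure Ω) (F : ℕ → MeasurableSpace Ω) (Sb Sa : ℕ → Ω → Fin d → ℝ)
    (t : ℕ) (f : Ω → ℝ) : Prop :=
  ∃ (Hp Hm : ℕ → Ω → Fin d → ℝ) (r : Ω → ℝ),
    (∀ j < t, Measurable[F j] (Hp j) ∧ Measurable[F j] (Hm j)) ∧
    (∀ j < t, ∀ ω i, 0 ≤ Hp j ω i ∧ 0 ≤ Hm j ω i) ∧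
    Measurable[F t] r ∧ (∀ᵐ ω ∂P, 0 ≤ r ω) ∧
    f =ᵐ[P] fun ω =>
      (∑ j ∈ range t,
        (dotp (Hp j ω) (Sb t ω - Sa j ω) - dotp (Hm j ω) (Sa t ω - Sb j ω))) - r ω

/-- `x_{s,u}(H) = -H⁺·S̄_s + H⁻·S̲_s + H⁺·S̲_u - H⁻·S̄_u` for an `𝓕_s`-measurable `H`. -/
def xval2 (Sb Sa : ℕ → Ω → Fin d → ℝ) (s u : ℕ) (H : Ω → Fin d → ℝ) (ω : Ω) : ℝ :=
  - dotp (posPart (H ω)) (Sa s ω) + dotp (negPart (H ω)) (Sb s ω)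
    + dotp (posPart (H ω)) (Sb u ω) - dotp (negPart (H ω)) (Sa u ω)

/-- Membership (up to a.s. equality) in `𝒜_{t-1,t+k} = ℛ_{t-1,t+k} - L⁰₊(𝓕_{t+k})` where
`ℛ_{t-1,t+k} = {x_{t-1,t+k}(H) : H ∈ L⁰(ℝ^d, 𝓕_{t-1})}`. -/
def memA2 (P : Measure Ω) (F : ℕ → MeasurableSpace Ω) (Sb Sa : ℕ → Ω → Fin d → ℝ)
    (t k : ℕ) (f : Ω → ℝ) : Prop :=
  ∃ (H : Ω → Fin d → ℝ) (r : Ω → ℝ),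
    Measurable[F (t - 1)] H ∧ Measurable[F (t + k)] r ∧ (∀ᵐ ω ∂P, 0 ≤ r ω) ∧
    f =ᵐ[P] fun ω => xval2 Sb Sa (t - 1) (t + k) H ω - r ω

end Market

end BidAskFTAP

/-!
Fix a dense sequence `q` in the proper space `E`. If `x` frequently visits the closed ball
`closedBall c r`, it has a cluster point there, so some `q j` with `dist (q j) c ≤ r + ε` is
frequently within `ε` of `x`. Taking at scale `2⁻ᵏ` the least such `j` yields centres `cₖ` with
`dist cₖ cₖ₊₁ = O(2⁻ᵏ)`, and `σₖ`, the first index after `σₖ₋₁` at which `X` is within `2⁻ᵏ` of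
`cₖ`, makes `X_{σₖ}` Cauchy. Least indices of measurable conditions are measurable, which makes
the `cₖ` and `σₖ` measurable without any measurable selection theorem.
-/

open Filter Metric MeasureTheory Topology

namespace MeasurableSubseq

lemma measurable_nat_sInf {α : Type*} [MeasurableSpace α] {p : α → ℕ → Prop}
    (hp : ∀ n, MeasurableSet {x | p x n}) : Measurable fun x => sInf {n | p x n} := by
  classical
  have hex : ∀ x, ∃ n, p x n ∨ ∀ m, ¬ p x m := fun x => by
    by_cases h : ∃ n, p x n
    · exact h.imp fun _ => Or.inl
    · exact ⟨0, Or.inr (not_exists.1 h)⟩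
  have hm : ∀ n, MeasurableSet {x | p x n ∨ ∀ m, ¬ p x m} := fun n => by
    simpa only [Set.ofPred_or, Set.ofPred_forall, ← Set.compl_ofPred]
      using (hp n).union (.iInter fun m => (hp m).compl)
  convert measurable_find hex hm with x
  by_cases h : ∃ n, p x n
  · refine le_antisymm (Nat.sInf_le ?_) (Nat.find_min' _ (Or.inl (Nat.sInf_mem h)))
    exact (Nat.find_spec (hex x)).resolve_right fun hall => h.elim hall
  · have hempty : {n | p x n} = ∅ := Set.eq_empty_of_forall_notMem (not_exists.1 h)
    rw [hempty, Nat.sInf_empty, eq_comm, Nat.find_eq_zero]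
    exact Or.inr (not_exists.1 h)

lemma exists_frequently_mem_closedBall_of_denseRange {E : Type*} [PseudoMetricSpace E]
    [ProperSpace E] {q : ℕ → E} (hq : DenseRange q) {x : ℕ → E} {c : E} {r ε : ℝ}
    (hε : 0 < ε) (h : ∃ᶠ n in atTop, x n ∈ closedBall c r) :
    ∃ j, dist (q j) c ≤ r + ε ∧ ∃ᶠ n in atTop, x n ∈ closedBall (q j) ε := by
  obtain ⟨a, hac, ha⟩ := (isCompact_closedBall c r).exists_mapClusterPt_of_frequently h
  obtain ⟨j, hj⟩ := hq.exists_dist_lt a (half_pos hε)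
  refine ⟨j, ?_, (ha.frequently (ball_mem_nhds a (half_pos hε))).mono fun n hn => ?_⟩
  · linarith [dist_triangle (q j) a c, mem_closedBall.1 hac, dist_comm a (q j)]
  · rw [mem_closedBall]
    linarith [dist_triangle (x n) a (q j), mem_ball.1 hn]

lemma exists_frequently_mem_closedBall_of_liminf_nnnorm_lt_top {E : Type*}
    [SeminormedAddCommGroup E] {x : ℕ → E}
    (h : liminf (fun n => (‖x n‖₊ : ℝ≥0∞)) atTop < ⊤) :
    ∃ R, ∃ᶠ n in atTop, x n ∈ closedBall 0 R := by
  obtain ⟨R, hR, -⟩ := ENNReal.lt_iff_exists_nnreal_btwn.1 h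
  refine ⟨R, (frequently_lt_of_liminf_lt (by isBoundedDefault) hR).mono fun n hn => ?_⟩
  rw [mem_closedBall_zero_iff]
  exact_mod_cast hn.le

section Construction

variable {Ω E : Type*} [PseudoMetricSpace E]

-- Where `X · ω` visits no bounded set infinitely often these sets may be empty (`sInf ∅ = 0`).
def center (X : ℕ → Ω → E) (q : ℕ → E) : ℕ → Ω → E
  | 0 => fun ω => q (sInf {j | ∃ᶠ n in atTop, X n ω ∈ closedBall (q j) (1 / 2 ^ 0)})
  | k + 1 => fun ω => q (sInf {j | dist (q j) (center X q k ω) ≤ 1 / 2 ^ k + 1 / 2 ^ (k + 1) ∧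
      ∃ᶠ n in atTop, X n ω ∈ closedBall (q j) (1 / 2 ^ (k + 1))})

def index (X : ℕ → Ω → E) (q : ℕ → E) : ℕ → Ω → ℕ
  | 0 => fun ω => sInf {n | X n ω ∈ closedBall (center X q 0 ω) (1 / 2 ^ 0)}
  | k + 1 => fun ω => sInf {n | index X q k ω < n ∧
      X n ω ∈ closedBall (center X q (k + 1) ω) (1 / 2 ^ (k + 1))}

end Construction

section Convergence

variable {Ω E : Type*} [PseudoMetricSpace E] [ProperSpace E] {X : ℕ → Ω → E} {q : ℕ → E}
  {ω : Ω}

lemma center_succ_spec (hq : DenseRange q) {k : ℕ}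
    (hk : ∃ᶠ n in atTop, X n ω ∈ closedBall (center X q k ω) (1 / 2 ^ k)) :
    dist (center X q (k + 1) ω) (center X q k ω) ≤ 1 / 2 ^ k + 1 / 2 ^ (k + 1) ∧
      ∃ᶠ n in atTop, X n ω ∈ closedBall (center X q (k + 1) ω) (1 / 2 ^ (k + 1)) :=
  Nat.sInf_mem (exists_frequently_mem_closedBall_of_denseRange hq (by positivity) hk)

lemma frequently_mem_closedBall_center (hq : DenseRange q)
    (hω : ∃ c r, ∃ᶠ n in atTop, X n ω ∈ closedBall c r) :
    ∀ k, ∃ᶠ n in atTop, X n ω ∈ closedBall (center X q k ω) (1 / 2 ^ k)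
  | 0 => by
    obtain ⟨c, r, h⟩ := hω
    exact Nat.sInf_mem
      ((exists_frequently_mem_closedBall_of_denseRange hq (by positivity) h).imp fun _ => And.right)
  | k + 1 => (center_succ_spec hq (frequently_mem_closedBall_center hq hω k)).2

lemma index_succ_spec (hq : DenseRange q) (hω : ∃ c r, ∃ᶠ n in atTop, X n ω ∈ closedBall c r)
    (k : ℕ) :
    index X q k ω < index X q (k + 1) ω ∧
      X (index X q (k + 1) ω) ω ∈ closedBall (center X q (k + 1) ω) (1 / 2 ^ (k + 1)) :=
  Nat.sInf_mem (s := {n | index X q k ω < n ∧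
      X n ω ∈ closedBall (center X q (k + 1) ω) (1 / 2 ^ (k + 1))})
    (frequently_atTop.1 (frequently_mem_closedBall_center hq hω (k + 1)) (index X q k ω + 1))

lemma mem_closedBall_index (hq : DenseRange q)
    (hω : ∃ c r, ∃ᶠ n in atTop, X n ω ∈ closedBall c r) :
    ∀ k, X (index X q k ω) ω ∈ closedBall (center X q k ω) (1 / 2 ^ k)
  | 0 => Nat.sInf_mem (frequently_mem_closedBall_center hq hω 0).exists
  | k + 1 => (index_succ_spec hq hω k).2

lemma strictMono_index (hq : DenseRange q)
    (hω : ∃ c r, ∃ᶠ n in atTop, X n ω ∈ closedBall c r) :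
    StrictMono fun k => index X q k ω :=
  strictMono_nat_of_lt_succ fun k => (index_succ_spec hq hω k).1

lemma cauchySeq_index (hq : DenseRange q)
    (hω : ∃ c r, ∃ᶠ n in atTop, X n ω ∈ closedBall c r) :
    CauchySeq fun k => X (index X q k ω) ω := by
  refine cauchySeq_of_le_geometric_two (C := 6) fun k => ?_
  have h₁ := mem_closedBall.1 (mem_closedBall_index hq hω k)
  have h₂ := mem_closedBall.1 (mem_closedBall_index hq hω (k + 1))
  have h₃ := (center_succ_spec hq (frequently_mem_closedBall_center hq hω k)).1
  have hpow : (1 : ℝ) / 2 ^ (k + 1) = 1 / 2 ^ k / 2 := by rw [pow_succ, div_div]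
  have hC : (6 : ℝ) / 2 / 2 ^ k = 3 * (1 / 2 ^ k) := by ring
  linarith [dist_triangle4 (X (index X q k ω) ω) (center X q k ω) (center X q (k + 1) ω)
    (X (index X q (k + 1) ω) ω), dist_comm (center X q k ω) (center X q (k + 1) ω),
    dist_comm (center X q (k + 1) ω) (X (index X q (k + 1) ω) ω)]

end Convergence

section Measurability

variable {Ω E : Type*} [MeasurableSpace Ω] [PseudoMetricSpace E] [MeasurableSpace E]
  [BorelSpace E] [SecondCountableTopology E] {X : ℕ → Ω → E}

lemma measurableSet_frequently_mem_closedBall (hX : ∀ n, Measurable (X n)) {c : Ω → E}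
    (hc : Measurable c) (r : ℝ) :
    MeasurableSet {ω | ∃ᶠ n in atTop, X n ω ∈ closedBall (c ω) r} := by
  have hlimsup : {ω | ∃ᶠ n in atTop, X n ω ∈ closedBall (c ω) r} =
      limsup (fun n => {ω | dist (X n ω) (c ω) ≤ r}) atTop := by
    ext ω
    rw [mem_limsup_iff_frequently_mem]
    rfl
  rw [hlimsup]
  exact .measurableSet_limsup fun n => measurableSet_le ((hX n).dist hc) measurable_const

variable (q : ℕ → E)

lemma measurable_center (hX : ∀ n, Measurable (X n)) : ∀ k, Measurable (center X q k)
  | 0 => measurable_from_nat.comp <| measurable_nat_sInf fun _ =>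
    measurableSet_frequently_mem_closedBall hX measurable_const _
  | k + 1 => measurable_from_nat.comp <| measurable_nat_sInf fun _ =>
    (measurableSet_le (measurable_const.dist (measurable_center hX k)) measurable_const).inter
      (measurableSet_frequently_mem_closedBall hX measurable_const _)

lemma measurable_index (hX : ∀ n, Measurable (X n)) : ∀ k, Measurable (index X q k)
  | 0 => measurable_nat_sInf fun n =>
    measurableSet_le ((hX n).dist (measurable_center q hX 0)) measurable_const
  | k + 1 => measurable_nat_sInf fun n =>
    (measurableSet_lt (measurable_index hX k) measurable_const).inter
      (measurableSet_le ((hX n).dist (measurable_center q hX (k + 1))) measurable_const)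

end Measurability

theorem exists_measurable_strictMono_tendsto_of_frequently_mem_closedBall {Ω E : Type*}
    [MeasurableSpace Ω] [PseudoMetricSpace E] [ProperSpace E] [MeasurableSpace E] [BorelSpace E]
    [Nonempty E] {X : ℕ → Ω → E} (hX : ∀ n, Measurable (X n)) :
    ∃ σ : ℕ → Ω → ℕ, (∀ k, Measurable (σ k)) ∧
      ∀ ω, (∃ c r, ∃ᶠ n in atTop, X n ω ∈ closedBall c r) →
        StrictMono (fun k => σ k ω) ∧ ∃ L, Tendsto (fun k => X (σ k ω) ω) atTop (𝓝 L) := by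
  obtain ⟨q, hq⟩ := TopologicalSpace.exists_dense_seq E
  exact ⟨index X q, measurable_index q hX, fun ω hω =>
    ⟨strictMono_index hq hω, cauchySeq_tendsto_of_complete (cauchySeq_index hq hω)⟩⟩

end MeasurableSubseq

theorem stmt15_general {Ω : Type*} [MeasurableSpace Ω] {d : ℕ}
    (P : MeasureTheory.Measure Ω)
    (X : ℕ → Ω → Fin d → ℝ) (hX : ∀ n, Measurable (X n))
    (hbd : ∀ᵐ ω ∂P, Filter.liminf (fun n => (‖X n ω‖₊ : ℝ≥0∞)) Filter.atTop < ⊤) :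
    ∃ σ : ℕ → Ω → ℕ,
      (∀ k, Measurable (σ k)) ∧
      (∀ᵐ ω ∂P, ∀ k, σ k ω < σ (k + 1) ω) ∧
      (∀ᵐ ω ∂P, ∃ L : Fin d → ℝ,
        Filter.Tendsto (fun k => X (σ k ω) ω) Filter.atTop (nhds L)) := by
  obtain ⟨σ, hσ, hconv⟩ :=
    MeasurableSubseq.exists_measurable_strictMono_tendsto_of_frequently_mem_closedBall hX
  have hbounded : ∀ᵐ ω ∂P, ∃ c r, ∃ᶠ n in atTop, X n ω ∈ closedBall c r :=
    hbd.mono fun ω hω =>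
      ⟨0, MeasurableSubseq.exists_frequently_mem_closedBall_of_liminf_nnnorm_lt_top hω⟩
  refine ⟨σ, hσ, ?_, ?_⟩
  · filter_upwards [hbounded] with ω hω k using (hconv ω hω).1 k.lt_succ_self
  · filter_upwards [hbounded] with ω hω using (hconv ω hω).2

/-- If `X_n` are `ℝ^d`-valued random vectors with
`liminf_n ‖X_n(ω)‖ < ∞` for a.e. `ω`, then there is an a.s. increasing sequence of
integer-valued random variables `σ_k` such that `X_{σ_k}` converges almost surely
(i.e. a.e. `(X_{σ_k(ω)}(ω))_k` is a convergent subsequence of `(X_n(ω))_n`). -/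
theorem stmt15 {Ω : Type*} [MeasurableSpace Ω] {d : ℕ}
    (P : MeasureTheory.Measure Ω) [MeasureTheory.IsProbabilityMeasure P]
    (X : ℕ → Ω → Fin d → ℝ) (hX : ∀ n, Measurable (X n))
    (hbd : ∀ᵐ ω ∂P, Filter.liminf (fun n => (‖X n ω‖₊ : ℝ≥0∞)) Filter.atTop < ⊤) :
    ∃ σ : ℕ → Ω → ℕ,
      (∀ k, Measurable (σ k)) ∧
      (∀ᵐ ω ∂P, ∀ k, σ k ω < σ (k + 1) ω) ∧
      (∀ᵐ ω ∂P, ∃ L : Fin d → ℝ,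
        Filter.Tendsto (fun k => X (σ k ω) ω) Filter.atTop (nhds L)) :=
  stmt15_general P X hX hbd
end
end

section
/- (Kreps–Yan) Let K ⊇ −L^1_+ be a closed convex cone in L^1(Ω, 𝓕, P) such that K ∩ L^1_+ = {0}. Then there exists a probability measure P̃ ∼ P with dP̃/dP ∈ L^∞ such that E_{P̃}[ξ] ≤ 0 for all ξ ∈ K. -/
open MeasureTheory Filter Finset
open scoped ENNReal NNReal

noncomputable section

/-!
For a non-null set `A`, Hahn–Banach separates `1_A` from `K`. Since `K` is a cone containing
`-L¹₊`, the separating functional is nonnegative on `L¹₊` and nonpositive on `K`, and a nonnegative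
functional on `L¹` is integration against a bounded density `g ≥ 0` (Riesz representation on
`L² ⊆ L¹`); moreover `∫_A g > 0`. The `[0, 1]`-valued densities in the polar cone of `K` are closed
under countable convex combinations, so an exhaustion argument yields one of them, `g`, with
`g > 0` a.s., and `dP̃ = g / E[g] dP` is the required measure.
-/

theorem ENNReal.one_div_toReal_le_one_div_toReal {p q : ℝ≥0∞} (hp : p ≠ 0) (hpq : p ≤ q) :
    1 / q.toReal ≤ 1 / p.toReal := by
  rcases eq_or_ne q ∞ with rfl | hq
  · simp
  · exact one_div_le_one_div_of_le (ENNReal.toReal_pos hp (ne_top_of_le_ne_top hq hpq))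
      (ENNReal.toReal_mono hq hpq)

namespace MeasureTheory

variable {α : Type*} [MeasurableSpace α] {μ : Measure α}

namespace Lp

variable {E : Type*} [NormedAddCommGroup E] [NormedSpace ℝ E]

theorem continuousLinearMap_ext_indicatorConstLp {F : Type*} [NormedAddCommGroup F]
    [NormedSpace ℝ F] {p : ℝ≥0∞} [Fact (1 ≤ p)] (hp : p ≠ ∞)
    {f g : Lp E p μ →L[ℝ] F}
    (h : ∀ s (hs : MeasurableSet s) (hμs : μ s ≠ ∞) (c : E),
      f (indicatorConstLp p hs hμs c) = g (indicatorConstLp p hs hμs c)) : f = g := by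
  refine ContinuousLinearMap.ext fun ξ => Lp.induction hp (fun ξ => f ξ = g ξ) ?_ ?_
    (isClosed_eq f.continuous g.continuous) ξ
  · intro c s hs hμs
    rw [Lp.simpleFunc.coe_indicatorConst]
    exact h s hs hμs.ne c
  · intro _ _ _ _ _ hf hg
    rw [map_add, map_add, hf, hg]

def inclusion (μ : Measure α) [IsFiniteMeasure μ] {p q : ℝ≥0∞} [Fact (1 ≤ p)] [Fact (1 ≤ q)]
    (hpq : p ≤ q) : Lp E q μ →L[ℝ] Lp E p μ :=
  LinearMap.mkContinuousOfExistsBound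
    { toFun := fun ξ => ((Lp.memLp ξ).mono_exponent hpq).toLp ξ
      map_add' := fun ξ η => by
        rw [← MemLp.toLp_add]
        exact MemLp.toLp_congr _ _ (Lp.coeFn_add ξ η)
      map_smul' := fun c ξ => by
        rw [RingHom.id_apply, ← MemLp.toLp_const_smul]
        exact MemLp.toLp_congr _ _ (Lp.coeFn_smul c ξ) }
    ⟨(μ Set.univ ^ (1 / p.toReal - 1 / q.toReal)).toReal, fun ξ => by
      have hfin : μ Set.univ ^ (1 / p.toReal - 1 / q.toReal) ≠ ∞ :=
        ENNReal.rpow_ne_top_of_nonneg (sub_nonneg.2 <|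
          ENNReal.one_div_toReal_le_one_div_toReal (zero_lt_one.trans_le Fact.out).ne' hpq)
          (measure_ne_top _ _)
      rw [LinearMap.coe_mk, AddHom.coe_mk, Lp.norm_toLp, Lp.norm_def, mul_comm,
        ← ENNReal.toReal_mul]
      exact ENNReal.toReal_mono (ENNReal.mul_ne_top (Lp.eLpNorm_ne_top ξ) hfin)
        (eLpNorm_le_eLpNorm_mul_rpow_measure_univ hpq (Lp.aestronglyMeasurable ξ))⟩

variable [IsFiniteMeasure μ] {p q : ℝ≥0∞} [Fact (1 ≤ p)] [Fact (1 ≤ q)]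

theorem coeFn_inclusion (hpq : p ≤ q) (ξ : Lp E q μ) : inclusion μ hpq ξ =ᵐ[μ] ξ :=
  MemLp.coeFn_toLp ((Lp.memLp ξ).mono_exponent hpq)

theorem inclusion_indicatorConstLp (hpq : p ≤ q) {s : Set α} (hs : MeasurableSet s) (c : E) :
    inclusion μ hpq (indicatorConstLp q hs (measure_ne_top μ s) c)
      = indicatorConstLp p hs (measure_ne_top μ s) c :=
  Lp.ext <| (coeFn_inclusion hpq _).trans <|
    indicatorConstLp_coeFn.trans indicatorConstLp_coeFn.symm

end Lp

theorem ae_nonneg_indicatorConstLp {p : ℝ≥0∞} {s : Set α} (hs : MeasurableSet s)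
    (hμs : μ s ≠ ∞) {c : ℝ} (hc : 0 ≤ c) : ∀ᵐ x ∂μ, 0 ≤ indicatorConstLp p hs hμs c x := by
  filter_upwards [indicatorConstLp_coeFn (p := p) (hs := hs) (hμs := hμs) (c := c)] with x hx
  rw [hx]
  exact Set.indicator_nonneg (fun _ _ => hc) x

theorem integral_mul_indicatorConstLp {g : α → ℝ} {s : Set α} (hs : MeasurableSet s)
    (hμs : μ s ≠ ∞) (c : ℝ) :
    ∫ x, g x * indicatorConstLp 1 hs hμs c x ∂μ = ∫ x in s, g x * c ∂μ := by
  rw [← integral_indicator hs]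
  refine integral_congr_ae ?_
  filter_upwards [indicatorConstLp_coeFn (p := 1) (hs := hs) (hμs := hμs) (c := c)] with x hx
  by_cases hxs : x ∈ s <;> simp [hx, hxs]

theorem AEMeasurable.exists_measurable_mem_Icc_ae_eq {f : α → ℝ} (hf : AEMeasurable f μ)
    {a b : ℝ} (hab : a ≤ b) (hfab : ∀ᵐ x ∂μ, f x ∈ Set.Icc a b) :
    ∃ g : α → ℝ, Measurable g ∧ (∀ x, g x ∈ Set.Icc a b) ∧ f =ᵐ[μ] g :=
  ⟨fun x => Set.projIcc a b hab (hf.mk f x),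
    (continuous_subtype_val.comp continuous_projIcc).measurable.comp hf.measurable_mk,
    fun x => (Set.projIcc a b hab _).2, by
      filter_upwards [hf.ae_eq_mk, hfab] with x hx hxab
      rw [← hx, Set.projIcc_of_mem hab hxab]⟩

theorem exists_integral_mul_eq_of_nonneg [IsFiniteMeasure μ] (f : Lp ℝ 1 μ →L[ℝ] ℝ)
    (hf : ∀ ξ : Lp ℝ 1 μ, (∀ᵐ x ∂μ, 0 ≤ ξ x) → 0 ≤ f ξ) :
    ∃ g : α → ℝ, Measurable g ∧ (∀ x, g x ∈ Set.Icc 0 ‖f‖) ∧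
      ∀ ξ : Lp ℝ 1 μ, f ξ = ∫ x, g x * ξ x ∂μ := by
  obtain ⟨g₂, hg₂⟩ : ∃ g₂ : Lp ℝ 2 μ, ∀ η, inner ℝ g₂ η = f (Lp.inclusion μ one_le_two η) :=
    ⟨(InnerProductSpace.toDual ℝ _).symm (f.comp (Lp.inclusion μ one_le_two)),
      fun _ => InnerProductSpace.toDual_symm_apply⟩
  have hg₂_int : Integrable g₂ μ := (Lp.memLp g₂).integrable one_le_two
  have hset : ∀ s (hs : MeasurableSet s) (hμs : μ s ≠ ∞) (c : ℝ),
      f (indicatorConstLp 1 hs hμs c) = ∫ x in s, g₂ x * c ∂μ := by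
    intro s hs hμs c
    rw [← Lp.inclusion_indicatorConstLp one_le_two hs c, ← hg₂, real_inner_comm,
      L2.inner_indicatorConstLp_eq_setIntegral_inner]
    simp_rw [Real.inner_apply, mul_comm c]
  have hbound : ∀ᵐ x ∂μ, g₂ x ∈ Set.Icc 0 ‖f‖ := by
    have h_nonneg : ∀ᵐ x ∂μ, 0 ≤ g₂ x := by
      refine ae_nonneg_of_forall_setIntegral_nonneg hg₂_int fun s hs hμs => ?_
      simpa [hset] using hf _ (ae_nonneg_indicatorConstLp hs hμs.ne zero_le_one)
    have h_le : ∀ᵐ x ∂μ, g₂ x ≤ ‖f‖ := by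
      refine ae_le_of_forall_setIntegral_le hg₂_int (integrable_const ‖f‖) fun s hs hμs => ?_
      calc ∫ x in s, g₂ x ∂μ = f (indicatorConstLp 1 hs hμs.ne 1) := by simp [hset]
        _ ≤ ‖f‖ * ‖indicatorConstLp 1 hs hμs.ne (1 : ℝ)‖ :=
          (le_abs_self _).trans (f.le_opNorm _)
        _ = ∫ _ in s, ‖f‖ ∂μ := by
          simp [norm_indicatorConstLp one_ne_zero ENNReal.one_ne_top, mul_comm]
    filter_upwards [h_nonneg, h_le] with x h₀ h₁ using ⟨h₀, h₁⟩
  obtain ⟨g, hg, hg_mem, hg₂g⟩ :=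
    (Lp.aestronglyMeasurable g₂).aemeasurable.exists_measurable_mem_Icc_ae_eq (norm_nonneg f)
      hbound
  have hg_top : MemLp g ∞ μ := memLp_top_of_bound hg.aestronglyMeasurable ‖f‖ <|
    Eventually.of_forall fun x => by rw [Real.norm_of_nonneg (hg_mem x).1]; exact (hg_mem x).2
  set Φ := (ContinuousLinearMap.mul ℝ ℝ).lpPairing μ ∞ 1 (hg_top.toLp g)
  have hΦ : ∀ ξ, Φ ξ = ∫ x, g x * ξ x ∂μ := fun ξ => by
    rw [ContinuousLinearMap.lpPairing_eq_integral]
    refine integral_congr_ae ?_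
    filter_upwards [hg_top.coeFn_toLp] with x hx
    simp [hx]
  have hfΦ : f = Φ := Lp.continuousLinearMap_ext_indicatorConstLp ENNReal.one_ne_top
    fun s hs hμs c => by
      rw [hset, hΦ, integral_mul_indicatorConstLp]
      exact setIntegral_congr_ae hs (hg₂g.mono fun x hx _ => by rw [hx])
  exact ⟨g, hg, hg_mem, fun ξ => by rw [hfΦ, hΦ]⟩

theorem le_zero_of_forall_lt_of_smul_mem {E F : Type*} [AddCommGroup E] [Module ℝ E]
    [FunLike F E ℝ] [LinearMapClass F ℝ E ℝ] {K : Set E}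
    (hcone : ∀ ξ ∈ K, ∀ c : ℝ, 0 ≤ c → c • ξ ∈ K) (f : F) {u : ℝ} (hf : ∀ ξ ∈ K, f ξ < u)
    {ξ : E} (hξ : ξ ∈ K) : f ξ ≤ 0 := by
  have hu : 0 < u := by simpa using hf _ (hcone ξ hξ 0 le_rfl)
  by_contra! hfξ
  have := hf _ (hcone ξ hξ (u / f ξ) (div_nonneg hu.le hfξ.le))
  rw [map_smul, smul_eq_mul, div_mul_cancel₀ _ hfξ.ne'] at this
  exact this.false

theorem exists_forall_measure_sdiff_eq_zero {ι : Type*} [Nonempty ι] [IsFiniteMeasure μ]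
    {s : ι → Set α} (hs : ∀ i, MeasurableSet (s i))
    (hdir : ∀ i : ℕ → ι, ∃ j, ∀ n, s (i n) ⊆ s j) : ∃ j, ∀ i, μ (s i \ s j) = 0 := by
  obtain ⟨u, -, hu_lim, hu_mem⟩ :=
    exists_seq_tendsto_sSup (Set.range_nonempty fun i => μ (s i)) (OrderTop.bddAbove _)
  choose i hi using hu_mem
  obtain ⟨j, hj⟩ := hdir i
  have hj_max : ⨆ i, μ (s i) ≤ μ (s j) :=
    le_of_tendsto' hu_lim fun n => hi n ▸ measure_mono (hj n)
  refine ⟨j, fun k => ?_⟩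
  obtain ⟨l, hl⟩ := hdir fun n => if n = 0 then k else j
  have hkl : s k ⊆ s l := by simpa using hl 0
  have hjl : s j ⊆ s l := by simpa using hl 1
  rw [← nonpos_iff_eq_zero]
  calc μ (s k \ s j) ≤ μ (s l \ s j) := measure_mono (Set.sdiff_subset_sdiff_left hkl)
    _ = μ (s l) - μ (s j) := measure_sdiff hjl (hs j).nullMeasurableSet (measure_ne_top _ _)
    _ ≤ 0 := tsub_nonpos.2 ((le_iSup (fun i => μ (s i)) l).trans hj_max)

section PolarDensity

variable {P : Measure α} {K : Set (Lp ℝ 1 P)}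

structure IsPolarDensity (K : Set (Lp ℝ 1 P)) (g : α → ℝ) : Prop where
  measurable : Measurable g
  mem_Icc : ∀ ω, g ω ∈ Set.Icc 0 1
  integral_mul_nonpos : ∀ ξ ∈ K, ∫ ω, g ω * ξ ω ∂P ≤ 0

theorem IsPolarDensity.integrable_mul {g : α → ℝ} (hg : IsPolarDensity K g) (ξ : Lp ℝ 1 P) :
    Integrable (fun ω => g ω * ξ ω) P :=
  (L1.integrable_coeFn ξ).bdd_mul hg.measurable.aestronglyMeasurable <|
    Eventually.of_forall fun ω => by
      rw [Real.norm_of_nonneg (hg.mem_Icc ω).1]; exact (hg.mem_Icc ω).2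

theorem IsPolarDensity.summable_mul {g : ℕ → α → ℝ} (hg : ∀ n, IsPolarDensity K (g n))
    {w : ℕ → ℝ} (hw_nonneg : ∀ n, 0 ≤ w n) (hw : Summable w) (ω : α) :
    Summable fun n => w n * g n ω :=
  hw.of_nonneg_of_le (fun n => mul_nonneg (hw_nonneg n) ((hg n).mem_Icc ω).1)
    fun n => mul_le_of_le_one_right (hw_nonneg n) ((hg n).mem_Icc ω).2

theorem IsPolarDensity.tsum {g : ℕ → α → ℝ} (hg : ∀ n, IsPolarDensity K (g n)) {w : ℕ → ℝ}
    (hw_nonneg : ∀ n, 0 ≤ w n) (hw : HasSum w 1) :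
    IsPolarDensity K fun ω => ∑' n, w n * g n ω := by
  have hle : ∀ n ω, w n * g n ω ≤ w n := fun n ω =>
    mul_le_of_le_one_right (hw_nonneg n) ((hg n).mem_Icc ω).2
  have hnonneg : ∀ n ω, 0 ≤ w n * g n ω := fun n ω =>
    mul_nonneg (hw_nonneg n) ((hg n).mem_Icc ω).1
  have hsum := IsPolarDensity.summable_mul hg hw_nonneg hw.summable
  refine ⟨?_, fun ω => ⟨tsum_nonneg (hnonneg · ω), ?_⟩, fun ξ hξ => ?_⟩
  · refine measurable_of_tendsto_metrizable
      (fun N => Finset.measurable_sum (range N) fun n _ => (hg n).measurable.const_mul (w n))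
      (tendsto_pi_nhds.2 fun ω => ?_)
    simpa using (hsum ω).hasSum.tendsto_sum_nat
  · exact hw.tsum_eq ▸ (hsum ω).tsum_le_tsum (hle · ω) hw.summable
  · have hint : ∀ n, Integrable (fun ω => w n * g n ω * ξ ω) P := fun n => by
      simpa only [mul_assoc] using ((hg n).integrable_mul ξ).const_mul (w n)
    have hnorm : ∀ n, ∫ ω, ‖w n * g n ω * ξ ω‖ ∂P ≤ w n * ‖ξ‖ := fun n => by
      rw [L1.norm_eq_integral_norm, ← integral_const_mul]
      refine integral_mono (hint n).norm ((L1.integrable_coeFn ξ).norm.const_mul _) fun ω => ?_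
      rw [norm_mul, Real.norm_of_nonneg (hnonneg n ω)]
      exact mul_le_mul_of_nonneg_right (hle n ω) (norm_nonneg _)
    calc ∫ ω, (∑' n, w n * g n ω) * ξ ω ∂P = ∫ ω, ∑' n, w n * g n ω * ξ ω ∂P := by
          simp_rw [tsum_mul_right]
      _ = ∑' n, ∫ ω, w n * g n ω * ξ ω ∂P :=
          (integral_tsum_of_summable_integral_norm hint <|
            (hw.summable.mul_right ‖ξ‖).of_nonneg_of_le
              (fun n => integral_nonneg fun _ => norm_nonneg _) hnorm).symm
      _ ≤ 0 := tsum_nonpos fun n => by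
          simp_rw [mul_assoc]
          rw [integral_const_mul]
          exact mul_nonpos_of_nonneg_of_nonpos (hw_nonneg n) ((hg n).integral_mul_nonpos ξ hξ)

theorem IsPolarDensity.exists_forall_pos_subset {g : ℕ → α → ℝ}
    (hg : ∀ n, IsPolarDensity K (g n)) :
    ∃ G, IsPolarDensity K G ∧ ∀ n, {ω | 0 < g n ω} ⊆ {ω | 0 < G ω} := by
  have hw_pos : ∀ n : ℕ, 0 < 1 / 2 / (2 : ℝ) ^ n := fun n => by positivity
  refine ⟨_, IsPolarDensity.tsum hg (fun n => (hw_pos n).le) (hasSum_geometric_two' 1),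
    fun n ω hω => ?_⟩
  exact (IsPolarDensity.summable_mul hg (fun n => (hw_pos n).le)
    (hasSum_geometric_two' 1).summable ω).tsum_pos
    (fun m => mul_nonneg (hw_pos m).le ((hg m).mem_Icc ω).1) n (mul_pos (hw_pos n) hω)

variable (hclosed : IsClosed K) (hconvex : Convex ℝ K)
  (hcone : ∀ ξ ∈ K, ∀ c : ℝ, 0 ≤ c → c • ξ ∈ K)
  (hneg : ∀ ξ : Lp ℝ 1 P, (∀ᵐ ω ∂P, ξ ω ≤ 0) → ξ ∈ K)
  (hpos : ∀ ξ ∈ K, (∀ᵐ ω ∂P, 0 ≤ ξ ω) → ξ = 0)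
include hclosed hconvex hcone hneg

theorem exists_separating_nonneg_functional {x : Lp ℝ 1 P} (hxK : x ∉ K) :
    ∃ f : StrongDual ℝ (Lp ℝ 1 P), (∀ ξ : Lp ℝ 1 P, (∀ᵐ ω ∂P, 0 ≤ ξ ω) → 0 ≤ f ξ) ∧
      (∀ ξ ∈ K, f ξ ≤ 0) ∧ 0 < f x := by
  obtain ⟨f, u, hfu, hux⟩ := geometric_hahn_banach_closed_point hconvex hclosed hxK
  have hfK : ∀ ξ ∈ K, f ξ ≤ 0 := fun ξ hξ => le_zero_of_forall_lt_of_smul_mem hcone f hfu hξ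
  refine ⟨f, fun ξ hξ => ?_, hfK, ?_⟩
  · have hnegξ : -ξ ∈ K := hneg (-ξ) <| by
      filter_upwards [Lp.coeFn_neg ξ, hξ] with ω hω hξω
      rw [hω, Pi.neg_apply]
      exact neg_nonpos.2 hξω
    simpa using hfK _ hnegξ
  · have h0K : (0 : Lp ℝ 1 P) ∈ K := hneg 0 <| by
      filter_upwards [Lp.coeFn_zero ℝ 1 P] with ω hω
      exact hω.le
    simpa using (hfu 0 h0K).trans hux

variable [IsFiniteMeasure P]
include hpos

theorem exists_isPolarDensity_measure_inter_ne_zero {A : Set α} (hA : MeasurableSet A)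
    (hPA : P A ≠ 0) : ∃ g, IsPolarDensity K g ∧ P (A ∩ {ω | 0 < g ω}) ≠ 0 := by
  set x : Lp ℝ 1 P := indicatorConstLp 1 hA (measure_ne_top P A) 1
  have hxK : x ∉ K := fun hxK => by
    have hx0 := congrArg norm (hpos x hxK (ae_nonneg_indicatorConstLp hA _ zero_le_one))
    rw [norm_indicatorConstLp one_ne_zero ENNReal.one_ne_top, norm_zero] at hx0
    simp [measureReal_eq_zero_iff, hPA] at hx0
  obtain ⟨f, hf_nonneg, hfK, hfx⟩ :=
    exists_separating_nonneg_functional hclosed hconvex hcone hneg hxK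
  obtain ⟨g, hg, hg_mem, hfg⟩ := exists_integral_mul_eq_of_nonneg f hf_nonneg
  have hf_norm : 0 < ‖f‖ := norm_pos_iff.2 fun hf => by simp [hf] at hfx
  refine ⟨fun ω => g ω / ‖f‖, ⟨hg.div_const _, fun ω => ?_, fun ξ hξ => ?_⟩, ?_⟩
  · exact ⟨div_nonneg (hg_mem ω).1 hf_norm.le, div_le_one_of_le₀ (hg_mem ω).2 hf_norm.le⟩
  · simp_rw [div_mul_eq_mul_div, integral_div, ← hfg]
    exact div_nonpos_of_nonpos_of_nonneg (hfK ξ hξ) hf_norm.le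
  · have hint : 0 < ∫ ω in A, g ω ∂P := by
      simpa [hfg, x, integral_mul_indicatorConstLp] using hfx
    rw [setIntegral_pos_iff_support_of_nonneg_ae (ae_of_all _ fun ω => (hg_mem ω).1)
      (Integrable.of_mem_Icc 0 ‖f‖ hg.aemeasurable (ae_of_all _ hg_mem)).integrableOn] at hint
    convert hint.ne' using 2
    ext ω
    simp [div_pos_iff_of_pos_right hf_norm, (hg_mem ω).1.lt_iff_ne', and_comm]

theorem exists_isPolarDensity_ae_pos : ∃ g, IsPolarDensity K g ∧ ∀ᵐ ω ∂P, 0 < g ω := by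
  have : Nonempty {g // IsPolarDensity K g} :=
    ⟨⟨fun _ => 0, measurable_const, fun _ => by simp, fun _ _ => by simp⟩⟩
  obtain ⟨⟨g, hg⟩, hmax⟩ := exists_forall_measure_sdiff_eq_zero (μ := P)
    (s := fun g : {g // IsPolarDensity K g} => {ω | 0 < g.1 ω})
    (fun g => measurableSet_lt measurable_const g.2.measurable) fun g =>
      let ⟨G, hG, hsub⟩ := IsPolarDensity.exists_forall_pos_subset fun n => (g n).2
      ⟨⟨G, hG⟩, hsub⟩
  refine ⟨g, hg, ae_iff.2 <| by_contra fun hne => ?_⟩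
  simp only [not_lt] at hne
  obtain ⟨h, hh, hPh⟩ := exists_isPolarDensity_measure_inter_ne_zero hclosed hconvex hcone hneg
    hpos (measurableSet_le hg.measurable measurable_const) hne
  refine hPh (measure_mono_null ?_ (hmax ⟨h, hh⟩))
  exact fun ω hω => ⟨hω.2, by simpa using hω.1⟩

end PolarDensity

theorem integral_pos_of_ae_pos [NeZero μ] {f : α → ℝ} (hf : Integrable f μ)
    (hpos : ∀ᵐ x ∂μ, 0 < f x) : 0 < ∫ x, f x ∂μ := by
  rw [integral_pos_iff_support_of_nonneg_ae (hpos.mono fun _ => le_of_lt) hf, pos_iff_ne_zero]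
  intro h0
  obtain ⟨x, hx, hx0⟩ := (hpos.and (measure_eq_zero_iff_ae_notMem.1 h0)).exists
  exact hx0 hx.ne'

theorem integral_withDensity_ofReal {h : α → ℝ} (hh : Measurable h) (hh0 : ∀ x, 0 ≤ h x)
    (ξ : α → ℝ) :
    ∫ x, ξ x ∂μ.withDensity (fun x => ENNReal.ofReal (h x)) = ∫ x, h x * ξ x ∂μ := by
  rw [integral_withDensity_eq_integral_toReal_smul hh.ennreal_ofReal
    (ae_of_all _ fun _ => ENNReal.ofReal_lt_top)]
  simp_rw [ENNReal.toReal_ofReal (hh0 _), smul_eq_mul]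

theorem isProbabilityMeasure_withDensity_ofReal {h : α → ℝ} (hh : Integrable h μ)
    (hh0 : ∀ x, 0 ≤ h x) (hh1 : ∫ x, h x ∂μ = 1) :
    IsProbabilityMeasure (μ.withDensity fun x => ENNReal.ofReal (h x)) := by
  constructor
  rw [withDensity_apply _ MeasurableSet.univ, Measure.restrict_univ,
    ← ofReal_integral_eq_lintegral_ofReal hh (ae_of_all _ hh0), hh1, ENNReal.ofReal_one]

end MeasureTheory

open MeasureTheory in
/-- (Kreps–Yan) Let `K ⊇ -L¹₊` be a closed convex cone in `L¹(Ω, 𝓕, P)`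
with `K ∩ L¹₊ = {0}`. Then there is a probability measure `P̃ ∼ P` with `dP̃/dP ∈ L^∞`
such that `E_{P̃}[ξ] ≤ 0` for all `ξ ∈ K`. -/
theorem stmt16 {Ω : Type*} [MeasurableSpace Ω]
    (P : Measure Ω) [IsProbabilityMeasure P]
    (K : Set (Lp ℝ 1 P))
    (hclosed : IsClosed K) (hconvex : Convex ℝ K)
    (hcone : ∀ ξ ∈ K, ∀ c : ℝ, 0 ≤ c → c • ξ ∈ K)
    (hneg : ∀ ξ : Lp ℝ 1 P, (∀ᵐ ω ∂P, (ξ : Ω → ℝ) ω ≤ 0) → ξ ∈ K)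
    (hpos : ∀ ξ ∈ K, (∀ᵐ ω ∂P, 0 ≤ (ξ : Ω → ℝ) ω) → ξ = 0) :
    ∃ Ptil : Measure Ω, IsProbabilityMeasure Ptil ∧ (P ≪ Ptil ∧ Ptil ≪ P) ∧
      (∃ C : NNReal, ∀ᵐ ω ∂P, Ptil.rnDeriv P ω ≤ (C : ENNReal)) ∧
      ∀ ξ ∈ K, ∫ ω, (ξ : Ω → ℝ) ω ∂Ptil ≤ 0 := by
  obtain ⟨g, hg, hg_pos⟩ := exists_isPolarDensity_ae_pos hclosed hconvex hcone hneg hpos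
  have hg_int : Integrable g P := Integrable.of_mem_Icc 0 1 hg.measurable.aemeasurable
    (ae_of_all _ hg.mem_Icc)
  set c := ∫ ω, g ω ∂P
  have hc : 0 < c := integral_pos_of_ae_pos hg_int hg_pos
  have hh : Measurable fun ω => g ω / c := hg.measurable.div_const c
  have hh0 : ∀ ω, 0 ≤ g ω / c := fun ω => div_nonneg (hg.mem_Icc ω).1 hc.le
  refine ⟨P.withDensity fun ω => ENNReal.ofReal (g ω / c),
    isProbabilityMeasure_withDensity_ofReal (hg_int.div_const c) hh0
      (by rw [integral_div, div_self hc.ne']),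
    ⟨withDensity_absolutelyContinuous' hh.ennreal_ofReal.aemeasurable
      (hg_pos.mono fun ω hω => (ENNReal.ofReal_pos.2 (div_pos hω hc)).ne'),
      withDensity_absolutelyContinuous _ _⟩, ⟨(1 / c).toNNReal, ?_⟩, fun ξ hξ => ?_⟩
  · filter_upwards [Measure.rnDeriv_withDensity P hh.ennreal_ofReal] with ω hω
    rw [hω]
    exact ENNReal.ofReal_le_ofReal (div_le_div_of_nonneg_right (hg.mem_Icc ω).2 hc.le)
  · rw [integral_withDensity_ofReal hh hh0]
    simp_rw [div_mul_eq_mul_div, integral_div]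
    exact div_nonpos_of_nonpos_of_nonneg (hg.integral_mul_nonpos ξ hξ) hc.le
end
end

section
/- Let u̲, d̲, ū, d̄ be real numbers with −1 < d̲ < u̲ and −1 < d̄ < ū. Then there exists q ∈ (0,1) satisfying (1 + u̲)q + (1 + d̲)(1 − q) ≤ 1 and (1 + ū)q + (1 + d̄)(1 − q) ≥ 1 if and only if d̲ < 0 < ū and d̲·ū ≤ d̄·u̲. (These are the necessary and sufficient conditions for the existence of an equivalent bid-ask martingale measure, equivalently for the absence of arbitrage, in the one-step Cox–Ross–Rubinstein model with bid-ask spreads.) -/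
open MeasureTheory Filter Finset
open scoped ENNReal NNReal

noncomputable section

/-- In the one-step CRR model with bid-ask spreads, with
`u̲ = ub`, `d̲ = db`, `ū = ua`, `d̄ = da`, there exists `q ∈ (0,1)` satisfying
`(1 + u̲)q + (1 + d̲)(1 - q) ≤ 1` and `(1 + ū)q + (1 + d̄)(1 - q) ≥ 1` (i.e. an equivalent
bid-ask martingale measure exists, equivalently there is no arbitrage) iff
`d̲ < 0 < ū` and `d̲·ū ≤ d̄·u̲`. -/
theorem stmt18 (ub db ua da : ℝ)
    (h1 : -1 < db) (h2 : db < ub) (h3 : -1 < da) (h4 : da < ua) :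
    (∃ q : ℝ, 0 < q ∧ q < 1 ∧
        (1 + ub) * q + (1 + db) * (1 - q) ≤ 1 ∧ 1 ≤ (1 + ua) * q + (1 + da) * (1 - q)) ↔
      (db < 0 ∧ 0 < ua ∧ db * ua ≤ da * ub) := by
  constructor
  · rintro ⟨q, hq0, hq1, hle, hge⟩
    have hq1' : 0 < 1 - q := by linarith
    have hle' : ub * q + db * (1 - q) ≤ 0 := by nlinarith
    have hge' : 0 ≤ ua * q + da * (1 - q) := by nlinarith
    have hdb : db < 0 := by nlinarith
    have hua : 0 < ua := by nlinarith
    refine ⟨hdb, hua, ?_⟩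
    rcases le_or_gt ub 0 with hub | hub
    · rcases le_or_gt 0 da with hda | hda
      · nlinarith [mul_nonneg hda (neg_nonneg.mpr hub)]
      · nlinarith [mul_nonneg (neg_nonneg.mpr hda.le) (neg_nonneg.mpr hub),
          mul_pos (neg_pos.mpr hdb) hua]
    · rcases le_or_gt 0 da with hda | hda
      · nlinarith [mul_nonneg hda hub.le]
      · nlinarith [mul_pos hq0 hq1',
          mul_nonneg (neg_nonneg.mpr hle') hge']
  · rintro ⟨hdb, hua, hprod⟩
    rcases lt_or_ge 0 ub with hub | hub
    · have hne : ub - db ≠ 0 := by linarith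
      refine ⟨-db / (ub - db), div_pos (by linarith) (by linarith), ?_, ?_, ?_⟩
      · rw [div_lt_one (by linarith)]; linarith
      · have : ub * (-db / (ub - db)) + db * (1 - -db / (ub - db)) = 0 := by
          field_simp; ring
        nlinarith [this]
      · have h5 : (0:ℝ) < ub - db := by linarith
        have : ua * (-db / (ub - db)) + da * (1 - -db / (ub - db))
            = (-(db * ua) + da * ub) / (ub - db) := by field_simp; ring
        nlinarith [div_nonneg (by linarith : (0:ℝ) ≤ -(db * ua) + da * ub) h5.le]
    · rcases lt_or_ge da 0 with hda | hda
      · have hne : ua - da ≠ 0 := by linarith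
        have h5 : (0:ℝ) < ua - da := by linarith
        refine ⟨-da / (ua - da), div_pos (by linarith) h5, ?_, ?_, ?_⟩
        · rw [div_lt_one h5]; linarith
        · have hq0 : (0:ℝ) < -da / (ua - da) := div_pos (by linarith) h5
          have hq1 : -da / (ua - da) < 1 := by rw [div_lt_one h5]; linarith
          nlinarith
        · have : ua * (-da / (ua - da)) + da * (1 - -da / (ua - da)) = 0 := by
            field_simp; ring
          nlinarith [this]
      · exact ⟨1/2, by norm_num, by norm_num, by nlinarith, by nlinarith⟩
end
end
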